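/- arXiv:1810.02421 — 2 statements merged into one kernel-verified Lean document; each statement's English description precedes it below -/
import Mathlib

section
/- The modulus of the family of all curves in the rectangle [0,a]×[0,b] joining the two vertical sides {0}×[0,b] and {a}×[0,b] equals b/a. -/
open MeasureTheory

/-- Line integral of a density `ρ` along a curve `γ : ℝ → ℂ` parametrized on `[0,1]`. -/
noncomputable def densityCurveIntegral (ρ : ℂ → ℝ) (γ : ℝ → ℂ) : ℝ :=
  ∫ t in (0:ℝ)..1, ρ (γ t) * ‖deriv γ t‖

/-- `ρ` is an allowable (admissible) metric for the curve family `Γ`. -/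
def Allowable (ρ : ℂ → ℝ) (Γ : Set (ℝ → ℂ)) : Prop :=
  Measurable ρ ∧ (∀ z, 0 ≤ ρ z) ∧ ∀ γ ∈ Γ, 1 ≤ densityCurveIntegral ρ γ

/-- The modulus of a curve family. -/
noncomputable def modulus (Γ : Set (ℝ → ℂ)) : ENNReal :=
  ⨅ (ρ : ℂ → ℝ) (_ : Allowable ρ Γ), ∫⁻ z : ℂ, ENNReal.ofReal (ρ z ^ 2)

/-!
The constant density `a⁻¹` on the rectangle is allowable, since a curve joining the vertical
sides has length at least `a`, and its energy is `b / a`. Conversely, an allowable `ρ` has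
integral at least `1` along every horizontal segment of length `a`, so by Cauchy–Schwarz its
square has integral at least `1 / a` there; integrating over the heights gives `b / a`.
-/

open Set Complex
open scoped ENNReal

def rectangleCrossingCurves (a b : ℝ) : Set (ℝ → ℂ) :=
  {γ | ContDiff ℝ 1 γ ∧ (∀ t ∈ Icc (0:ℝ) 1, (γ t).re ∈ Icc 0 a ∧ (γ t).im ∈ Icc 0 b) ∧
    (γ 0).re = 0 ∧ (γ 1).re = a}

theorem modulus_le_of_allowable {ρ : ℂ → ℝ} {Γ : Set (ℝ → ℂ)} (h : Allowable ρ Γ) :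
    modulus Γ ≤ ∫⁻ z, ENNReal.ofReal (ρ z ^ 2) :=
  iInf₂_le ρ h

theorem le_modulus {m : ℝ≥0∞} {Γ : Set (ℝ → ℂ)}
    (h : ∀ ρ, Allowable ρ Γ → m ≤ ∫⁻ z, ENNReal.ofReal (ρ z ^ 2)) : m ≤ modulus Γ :=
  le_iInf₂ h

theorem norm_sub_le_integral_norm_deriv {E : Type*} [NormedAddCommGroup E] [NormedSpace ℝ E]
    [CompleteSpace E] {γ : ℝ → E} (hγ : ContDiff ℝ 1 γ) {s t : ℝ} (hst : s ≤ t) :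
    ‖γ t - γ s‖ ≤ ∫ u in s..t, ‖deriv γ u‖ := by
  rw [← intervalIntegral.integral_deriv_eq_sub (fun u _ => hγ.differentiable one_ne_zero u)
    ((hγ.continuous_deriv le_rfl).intervalIntegrable s t)]
  exact intervalIntegral.norm_integral_le_integral_norm hst

theorem densityCurveIntegral_indicator_const {S : Set ℂ} {γ : ℝ → ℂ}
    (hγ : ∀ t ∈ Icc (0:ℝ) 1, γ t ∈ S) (c : ℝ) :
    densityCurveIntegral (S.indicator fun _ => c) γ = c * ∫ t in (0:ℝ)..1, ‖deriv γ t‖ := by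
  rw [densityCurveIntegral, ← intervalIntegral.integral_const_mul]
  refine intervalIntegral.integral_congr fun t ht => ?_
  rw [uIcc_of_le zero_le_one] at ht
  simp only [indicator_of_mem (hγ t ht)]

theorem Complex.reProdIm_eq_preimage_measurableEquivRealProd (s t : Set ℝ) :
    s ×ℂ t = measurableEquivRealProd ⁻¹' (s ×ˢ t) :=
  rfl

theorem Complex.volume_reProdIm (s t : Set ℝ) : volume (s ×ℂ t) = volume s * volume t := by
  rw [reProdIm_eq_preimage_measurableEquivRealProd,
    volume_preserving_equiv_real_prod.measure_preimage_equiv, Measure.volume_eq_prod,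
    Measure.prod_prod]

theorem Complex.setLIntegral_reProdIm {F : ℂ → ℝ≥0∞} (hF : Measurable F) (s t : Set ℝ) :
    ∫⁻ z in s ×ℂ t, F z = ∫⁻ y in t, ∫⁻ x in s, F (x + y * I) := by
  set G : ℝ × ℝ → ℝ≥0∞ := fun p => F (p.1 + p.2 * I)
  calc ∫⁻ z in s ×ℂ t, F z = ∫⁻ z in measurableEquivRealProd ⁻¹' (s ×ˢ t),
        G (measurableEquivRealProd z) := by
        simp only [G, measurableEquivRealProd_apply, re_add_im,
          reProdIm_eq_preimage_measurableEquivRealProd]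
    _ = ∫⁻ p in s ×ˢ t, G p := volume_preserving_equiv_real_prod.setLIntegral_comp_preimage_emb
        measurableEquivRealProd.measurableEmbedding G (s ×ˢ t)
    _ = ∫⁻ y in t, ∫⁻ x in s, F (x + y * I) := by
        rw [Measure.volume_eq_prod, ← Measure.prod_restrict,
          lintegral_prod_symm G (hF.comp (by fun_prop)).aemeasurable]

theorem sq_lintegral_le_measure_univ_mul_lintegral_sq {α : Type*} [MeasurableSpace α]
    {μ : Measure α} {f : α → ℝ≥0∞} (hf : AEMeasurable f μ) :
    (∫⁻ x, f x ∂μ) ^ 2 ≤ μ univ * ∫⁻ x, f x ^ 2 ∂μ := by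
  have h := ENNReal.lintegral_mul_le_Lp_mul_Lq μ Real.HolderConjugate.two_two hf
    (aemeasurable_const (b := (1 : ℝ≥0∞)))
  simp only [Pi.mul_apply, mul_one, ENNReal.rpow_two, one_pow, lintegral_const, one_mul] at h
  calc (∫⁻ x, f x ∂μ) ^ 2 ≤ ((∫⁻ x, f x ^ 2 ∂μ) ^ (1 / 2 : ℝ) * μ univ ^ (1 / 2 : ℝ)) ^ 2 := by
        gcongr
    _ = μ univ * ∫⁻ x, f x ^ 2 ∂μ := by
        rw [mul_pow, ← ENNReal.rpow_natCast, ← ENNReal.rpow_natCast (μ univ ^ _),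
          ← ENNReal.rpow_mul, ← ENNReal.rpow_mul]
        norm_num [mul_comm]

theorem ofReal_intervalIntegral_sq_le {f : ℝ → ℝ} (hf : Measurable f) (hf₀ : ∀ x, 0 ≤ f x)
    {s t : ℝ} (hst : s ≤ t) :
    ENNReal.ofReal (∫ x in s..t, f x) ^ 2 ≤
      ENNReal.ofReal (t - s) * ∫⁻ x in Ioc s t, ENNReal.ofReal (f x ^ 2) := by
  have hle : ENNReal.ofReal (∫ x in s..t, f x) ≤ ∫⁻ x in Ioc s t, ENNReal.ofReal (f x) := by
    rw [intervalIntegral.integral_of_le hst,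
      integral_eq_lintegral_of_nonneg_ae (ae_of_all _ fun x => hf₀ x) hf.aestronglyMeasurable]
    exact ENNReal.ofReal_toReal_le
  calc _ ≤ (∫⁻ x in Ioc s t, ENNReal.ofReal (f x)) ^ 2 := by gcongr
    _ ≤ _ := sq_lintegral_le_measure_univ_mul_lintegral_sq hf.ennreal_ofReal.aemeasurable
    _ = _ := by
        simp only [Measure.restrict_apply_univ, Real.volume_Ioc, ← ENNReal.ofReal_pow (hf₀ _)]

theorem densityCurveIntegral_horizontal (ρ : ℂ → ℝ) {a : ℝ} (ha : 0 ≤ a) (y : ℝ) :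
    densityCurveIntegral ρ (fun t => ((a * t : ℝ) : ℂ) + y * I) =
      ∫ x in (0:ℝ)..a, ρ (x + y * I) := by
  have hderiv (t : ℝ) : deriv (fun t : ℝ => ((a * t : ℝ) : ℂ) + y * I) t = a := by
    simpa using (((hasDerivAt_id t).const_mul a).ofReal_comp.add_const (y * I)).deriv
  simp only [densityCurveIntegral, hderiv, norm_real, Real.norm_of_nonneg ha,
    intervalIntegral.integral_mul_const]
  simpa [mul_comm] using
    intervalIntegral.smul_integral_comp_mul_left (fun x : ℝ => ρ (x + y * I)) a (a := 0) (b := 1)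

theorem modulus_rectangleCrossingCurves_le {a : ℝ} (ha : 0 < a) (b : ℝ) :
    modulus (rectangleCrossingCurves a b) ≤ ENNReal.ofReal (b / a) := by
  set R := Icc 0 a ×ℂ Icc 0 b
  have hR : MeasurableSet R :=
    (measurable_re measurableSet_Icc).inter (measurable_im measurableSet_Icc)
  have hallow : Allowable (R.indicator fun _ => a⁻¹) (rectangleCrossingCurves a b) := by
    refine ⟨measurable_const.indicator hR, indicator_nonneg fun _ _ => by positivity, ?_⟩
    rintro γ ⟨hγ, hmem, h0, h1⟩
    rw [densityCurveIntegral_indicator_const hmem]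
    have hlength : a ≤ ∫ t in (0:ℝ)..1, ‖deriv γ t‖ :=
      calc a = (γ 1 - γ 0).re := by simp [h0, h1]
        _ ≤ ‖γ 1 - γ 0‖ := re_le_norm _
        _ ≤ _ := norm_sub_le_integral_norm_deriv hγ zero_le_one
    calc (1:ℝ) = a⁻¹ * a := (inv_mul_cancel₀ ha.ne').symm
      _ ≤ _ := by gcongr
  calc modulus _ ≤ ∫⁻ z, ENNReal.ofReal ((R.indicator fun _ => a⁻¹) z ^ 2) :=
        modulus_le_of_allowable hallow
    _ = ENNReal.ofReal (a⁻¹ ^ 2) * volume R := by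
        rw [← lintegral_indicator_const hR]
        exact congrArg _ (indicator_comp_of_zero (g := fun r : ℝ => ENNReal.ofReal (r ^ 2))
          (by simp)).symm
    _ = ENNReal.ofReal (b / a) := by
        rw [volume_reProdIm, Real.volume_Icc, Real.volume_Icc, sub_zero, sub_zero, ← mul_assoc,
          ← ENNReal.ofReal_mul (by positivity), ← ENNReal.ofReal_mul (by positivity)]
        congr 1
        field_simp

theorem inv_le_lintegral_horizontal_of_allowable {a b : ℝ} (ha : 0 < a) {ρ : ℂ → ℝ}
    (hρ : Allowable ρ (rectangleCrossingCurves a b)) {y : ℝ} (hy : y ∈ Icc 0 b) :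
    ENNReal.ofReal a⁻¹ ≤ ∫⁻ x in Ioc 0 a, ENNReal.ofReal (ρ (x + y * I) ^ 2) := by
  obtain ⟨hmeas, hnonneg, hadm⟩ := hρ
  have hsegment : (fun t => ((a * t : ℝ) : ℂ) + y * I) ∈ rectangleCrossingCurves a b := by
    refine ⟨(ofRealCLM.contDiff.comp (contDiff_const.mul contDiff_id)).add contDiff_const,
      fun t ht => ?_, by simp, by simp⟩
    simpa using ⟨⟨mul_nonneg ha.le ht.1, mul_le_of_le_one_right ha.le ht.2⟩, hy⟩
  have hline : 1 ≤ ∫ x in (0:ℝ)..a, ρ (x + y * I) :=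
    densityCurveIntegral_horizontal ρ ha.le y ▸ hadm _ hsegment
  have hCS := ofReal_intervalIntegral_sq_le (f := fun x : ℝ => ρ (x + y * I))
    (hmeas.comp (by fun_prop)) (fun x => hnonneg _) ha.le
  rw [sub_zero] at hCS
  rw [ENNReal.ofReal_inv_of_pos ha,
    ENNReal.inv_le_iff_le_mul (fun _ => (ENNReal.ofReal_pos.2 ha).ne') (by simp)]
  calc 1 ≤ ENNReal.ofReal (∫ x in (0:ℝ)..a, ρ (x + y * I)) ^ 2 :=
        one_le_pow₀ (ENNReal.one_le_ofReal.2 hline)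
    _ ≤ _ := hCS

theorem le_modulus_rectangleCrossingCurves {a : ℝ} (ha : 0 < a) (b : ℝ) :
    ENNReal.ofReal (b / a) ≤ modulus (rectangleCrossingCurves a b) := by
  refine le_modulus fun ρ hρ => ?_
  have hF : Measurable fun z => ENNReal.ofReal (ρ z ^ 2) := (hρ.1.pow_const 2).ennreal_ofReal
  calc ENNReal.ofReal (b / a) = ∫⁻ _ in Ioc 0 b, ENNReal.ofReal a⁻¹ := by
        rw [setLIntegral_const, Real.volume_Ioc, sub_zero, ← ENNReal.ofReal_mul (by positivity),
          div_eq_inv_mul]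
    _ ≤ ∫⁻ y in Ioc 0 b, ∫⁻ x in Ioc 0 a, ENNReal.ofReal (ρ (x + y * I) ^ 2) :=
        setLIntegral_mono' measurableSet_Ioc fun y hy =>
          inv_le_lintegral_horizontal_of_allowable ha hρ (Ioc_subset_Icc_self hy)
    _ = ∫⁻ z in Ioc 0 a ×ℂ Ioc 0 b, ENNReal.ofReal (ρ z ^ 2) :=
        (setLIntegral_reProdIm hF _ _).symm
    _ ≤ ∫⁻ z, ENNReal.ofReal (ρ z ^ 2) := setLIntegral_le_lintegral _ _

theorem modulus_rectangle_general (a b : ℝ) (ha : 0 < a) :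
    modulus {γ : ℝ → ℂ | ContDiff ℝ 1 γ ∧
      (∀ t ∈ Set.Icc (0:ℝ) 1, (γ t).re ∈ Set.Icc 0 a ∧ (γ t).im ∈ Set.Icc 0 b) ∧
      (γ 0).re = 0 ∧ (γ 1).re = a} = ENNReal.ofReal (b / a) :=
  le_antisymm (modulus_rectangleCrossingCurves_le ha b) (le_modulus_rectangleCrossingCurves ha b)

/-- The modulus of the family of curves in the rectangle `[0,a] × [0,b]` joining the two
vertical sides equals `b / a`. -/
theorem modulus_rectangle (a b : ℝ) (ha : 0 < a) (hb : 0 < b) :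
    modulus {γ : ℝ → ℂ | ContDiff ℝ 1 γ ∧
      (∀ t ∈ Set.Icc (0:ℝ) 1, (γ t).re ∈ Set.Icc 0 a ∧ (γ t).im ∈ Set.Icc 0 b) ∧
      (γ 0).re = 0 ∧ (γ 1).re = a} = ENNReal.ofReal (b / a) :=
  modulus_rectangle_general a b ha
end

section
/- Let λ = A(s+ti) with A(z) = (−z+1)/(z+1), s > 0, t ∈ ℝ. Then ((s²+t²)/s) / (2/(1−|λ|)) → 1 as s + |t| → ∞; in particular s + |t| → ∞ if and only if λ → −1. -/
/-!
With `z = s + t i` and `λ = A z` one has `λ + 1 = 2 / (z + 1)` and, from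
`‖z + 1‖² - ‖z - 1‖² = 4 Re z`,
`(s² + t²)(1 - |λ|) / (2s) = 2‖z‖² / (‖z + 1‖ (‖z + 1‖ + ‖z - 1‖))`.
For `Re z ≥ 0` both `‖z + 1‖` and `‖z - 1‖` lie within `1` of `‖z‖`, so this ratio is
`1 + O(1/‖z‖)`, and `‖λ + 1‖ = 2 / ‖z + 1‖` is comparable to `1/‖z‖`. Finally `s + |t|` and
`‖z‖` agree up to a factor `2`.
-/

open Complex

lemma abs_two_mul_sq_div_sub_one_le {r D : ℝ} (hr : 1 ≤ r) (hlo : r * (2 * r - 1) ≤ D)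
    (hhi : D ≤ 2 * (r + 1) ^ 2) : |2 * r ^ 2 / D - 1| ≤ 2 / r := by
  have hD : 0 < D := lt_of_lt_of_le (by nlinarith) hlo
  have hr0 : 0 < r := by linarith
  rw [abs_le, div_sub_one hD.ne']
  constructor
  · rw [neg_le, ← neg_div, div_le_div_iff₀ hD hr0]
    nlinarith
  · rw [div_le_div_iff₀ hD hr0]
    nlinarith

lemma Complex.abs_re_add_abs_im_le_two_mul_norm (z : ℂ) : |z.re| + |z.im| ≤ 2 * ‖z‖ := by
  linarith [abs_re_le_norm z, abs_im_le_norm z]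

noncomputable def cayley (z : ℂ) : ℂ := (-z + 1) / (z + 1)

namespace cayley

variable {z : ℂ}

lemma add_one_ne_zero_of_re_nonneg (hz : 0 ≤ z.re) : z + 1 ≠ 0 := by
  intro h
  have := congrArg re h
  simp only [add_re, one_re, zero_re] at this
  linarith

lemma add_one (hz : z + 1 ≠ 0) : cayley z + 1 = 2 / (z + 1) := by
  rw [cayley]
  field_simp
  ring

lemma norm_add_one (hz : z + 1 ≠ 0) : ‖cayley z + 1‖ = 2 / ‖z + 1‖ := by
  rw [add_one hz, norm_div, norm_ofNat]

lemma sq_norm_add_one (z : ℂ) : ‖z + 1‖ ^ 2 = ‖z‖ ^ 2 + 2 * z.re + 1 := by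
  simp only [Complex.sq_norm, normSq_apply, add_re, add_im, one_re, one_im]
  ring

lemma sq_norm_sub_one (z : ℂ) : ‖z - 1‖ ^ 2 = ‖z‖ ^ 2 - 2 * z.re + 1 := by
  simp only [Complex.sq_norm, normSq_apply, sub_re, sub_im, one_re, one_im]
  ring

lemma one_sub_norm (hz : z + 1 ≠ 0) :
    1 - ‖cayley z‖ = 4 * z.re / (‖z + 1‖ * (‖z + 1‖ + ‖z - 1‖)) := by
  have ha : 0 < ‖z + 1‖ := norm_pos_iff.mpr hz
  have hab : 0 < ‖z + 1‖ + ‖z - 1‖ := by positivity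
  rw [cayley, norm_div, neg_add_eq_sub, ← norm_neg (1 - z), neg_sub, eq_div_iff (by positivity)]
  field_simp
  linear_combination sq_norm_add_one z - sq_norm_sub_one z

lemma sq_norm_mul_one_sub_norm_div (hz : 0 < z.re) :
    ‖z‖ ^ 2 * (1 - ‖cayley z‖) / (2 * z.re) =
      2 * ‖z‖ ^ 2 / (‖z + 1‖ * (‖z + 1‖ + ‖z - 1‖)) := by
  rw [one_sub_norm (add_one_ne_zero_of_re_nonneg hz.le)]
  field_simp
  ring

lemma norm_le_norm_add_one (hz : 0 ≤ z.re) : ‖z‖ ≤ ‖z + 1‖ := by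
  rw [← pow_le_pow_iff_left₀ (norm_nonneg _) (norm_nonneg _) two_ne_zero, sq_norm_add_one]
  linarith

lemma abs_sq_norm_mul_one_sub_norm_div_sub_one_le (hz : 0 < z.re) (hr : 1 ≤ ‖z‖) :
    |‖z‖ ^ 2 * (1 - ‖cayley z‖) / (2 * z.re) - 1| ≤ 2 / ‖z‖ := by
  rw [sq_norm_mul_one_sub_norm_div hz]
  have h₁ : ‖z‖ ≤ ‖z + 1‖ := norm_le_norm_add_one hz.le
  have h₂ : ‖z + 1‖ ≤ ‖z‖ + 1 := by simpa using norm_add_le z 1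
  have h₃ : ‖z‖ - 1 ≤ ‖z - 1‖ := by simpa using norm_sub_norm_le z 1
  have h₄ : ‖z - 1‖ ≤ ‖z‖ + 1 := by simpa using norm_sub_le z 1
  apply abs_two_mul_sq_div_sub_one_le hr
  · exact mul_le_mul h₁ (by linarith) (by linarith) (norm_nonneg _)
  · nlinarith [norm_nonneg z, norm_nonneg (z + 1)]

lemma norm_add_one_le (hz : 0 < z.re) : ‖cayley z + 1‖ ≤ 2 / ‖z‖ := by
  rw [norm_add_one (add_one_ne_zero_of_re_nonneg hz.le)]
  exact div_le_div_of_nonneg_left zero_le_two (hz.trans_le (re_le_norm z))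
    (norm_le_norm_add_one hz.le)

lemma two_div_norm_add_one_le (hz : 0 ≤ z.re) : 2 / (‖z‖ + 1) ≤ ‖cayley z + 1‖ := by
  have hz1 := add_one_ne_zero_of_re_nonneg hz
  rw [norm_add_one hz1]
  exact div_le_div_of_nonneg_left zero_le_two (norm_pos_iff.mpr hz1)
    (by simpa using norm_add_le z 1)

end cayley

/-- With `λ = A(s+ti)`, `A(z) = (−z+1)/(z+1)`, `s > 0`:
`((s²+t²)/s)/(2/(1−|λ|)) → 1` as `s+|t| → ∞`; in particular `s+|t| → ∞` iff `λ → −1`. -/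
theorem asymptotics_of_parameter (A : ℂ → ℂ) (hA : ∀ z : ℂ, A z = (-z + 1) / (z + 1)) :
    (∀ ε > (0:ℝ), ∃ M : ℝ, ∀ s t : ℝ, 0 < s → M ≤ s + |t| →
      |((s ^ 2 + t ^ 2) * (1 - ‖A ((s : ℂ) + t * I)‖)) / (2 * s) - 1| < ε) ∧
    (∀ δ > (0:ℝ), ∃ M : ℝ, ∀ s t : ℝ, 0 < s → M ≤ s + |t| →
      ‖A ((s : ℂ) + t * I) + 1‖ < δ) ∧
    (∀ M : ℝ, ∃ δ > (0:ℝ), ∀ s t : ℝ, 0 < s →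
      ‖A ((s : ℂ) + t * I) + 1‖ < δ → M ≤ s + |t|) := by
  obtain rfl : A = cayley := funext hA
  have coords (s t : ℝ) (hs : 0 < s) : ((s : ℂ) + t * I).re = s ∧
      ‖(s : ℂ) + t * I‖ ^ 2 = s ^ 2 + t ^ 2 ∧
      s + |t| ≤ 2 * ‖(s : ℂ) + t * I‖ ∧ ‖(s : ℂ) + t * I‖ ≤ s + |t| := by
    have hre : ((s : ℂ) + t * I).re = s := by simp
    have him : ((s : ℂ) + t * I).im = t := by simp
    refine ⟨hre, by simp [Complex.sq_norm, normSq_add_mul_I], ?_, ?_⟩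
    · simpa [hre, him, abs_of_pos hs] using abs_re_add_abs_im_le_two_mul_norm ((s : ℂ) + t * I)
    · simpa [hre, him, abs_of_pos hs] using norm_le_abs_re_add_abs_im ((s : ℂ) + t * I)
  refine ⟨fun ε hε => ⟨4 / ε + 2, fun s t hs hM => ?_⟩,
    fun δ hδ => ⟨4 / δ + 1, fun s t hs hM => ?_⟩,
    fun M => ⟨2 / (|M| + 1), by positivity, fun s t hs hδ => ?_⟩⟩ <;>
  obtain ⟨hre, hnorm, hlo, hhi⟩ := coords s t hs
  · have hr : 2 / ε + 1 ≤ ‖(s : ℂ) + t * I‖ := by linarith [show 4 / ε = 2 * (2 / ε) by ring]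
    have hr₁ : 1 ≤ ‖(s : ℂ) + t * I‖ := by linarith [show 0 < 2 / ε by positivity]
    have h := cayley.abs_sq_norm_mul_one_sub_norm_div_sub_one_le (by rwa [hre]) hr₁
    rw [hre, hnorm] at h
    refine h.trans_lt ?_
    rw [div_lt_iff₀ (by linarith)]
    nlinarith [mul_div_cancel₀ 2 hε.ne']
  · refine (cayley.norm_add_one_le (by rwa [hre])).trans_lt ?_
    rw [div_lt_iff₀ (by linarith [show 0 < 4 / δ by positivity])]
    nlinarith [mul_div_cancel₀ 4 hδ.ne']
  · have h := (cayley.two_div_norm_add_one_le (by rw [hre]; exact hs.le)).trans_lt hδ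
    rw [div_lt_div_iff_of_pos_left two_pos (by positivity) (by positivity)] at h
    linarith [le_abs_self M]
end
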